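/- arXiv:1909.01812 — 2 statements merged into one kernel-verified Lean document; each statement's English description precedes it below -/
import Mathlib

section
/- Let λ ∈ (0,1) and let S, S' ⊆ [d] with |S|, |S'| ≤ d. Define diagonal matrices Σ, Σ' with Σ(i,i) = (1+λ)² if i ∈ S and 1 otherwise, similarly for Σ' with S'. Then trace(Σ'^{−1}Σ − I) + ln det(Σ') − ln det(Σ) ≤ |S|·(3λ² + λ³)/(1+λ) + |S'|·(3λ² + 2λ³)/(1+λ)². -/
theorem stmt_18 (d : ℕ) (lam : ℝ) (hlam : lam ∈ Set.Ioo (0:ℝ) 1)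
    (S S' : Finset (Fin d)) (hS : S.card ≤ d) (hS' : S'.card ≤ d) :
    let Sig : Matrix (Fin d) (Fin d) ℝ :=
      Matrix.diagonal fun i => if i ∈ S then (1 + lam)^2 else 1
    let Sig' : Matrix (Fin d) (Fin d) ℝ :=
      Matrix.diagonal fun i => if i ∈ S' then (1 + lam)^2 else 1
    (Sig'⁻¹ * Sig - 1).trace + Real.log Sig'.det - Real.log Sig.det ≤
      S.card * (3 * lam^2 + lam^3) / (1 + lam) +
      S'.card * (3 * lam^2 + 2 * lam^3) / (1 + lam)^2 := by
  intro Sig Sig'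
  obtain ⟨hl, hl1⟩ := hlam
  have h1l : (0:ℝ) < 1 + lam := by linarith
  set f : Fin d → ℝ := fun i => if i ∈ S then (1+lam)^2 else 1 with hf
  set f' : Fin d → ℝ := fun i => if i ∈ S' then (1+lam)^2 else 1 with hf'
  have hfpos : ∀ i, 0 < f i := by
    intro i; simp only [hf]; split <;> positivity
  have hfpos' : ∀ i, 0 < f' i := by
    intro i; simp only [hf']; split <;> positivity
  have hinv : Sig'⁻¹ = Matrix.diagonal fun i => (f' i)⁻¹ := by
    apply Matrix.inv_eq_right_inv
    rw [Matrix.diagonal_mul_diagonal, ← Matrix.diagonal_one]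
    exact congrArg Matrix.diagonal (funext fun i => mul_inv_cancel₀ (hfpos' i).ne')
  have hmul : Sig'⁻¹ * Sig = Matrix.diagonal (fun i => (f' i)⁻¹ * f i) := by
    rw [hinv, Matrix.diagonal_mul_diagonal]
  have htr : (Sig'⁻¹ * Sig - 1).trace = ∑ i, ((f' i)⁻¹ * f i - 1) := by
    rw [hmul, ← Matrix.diagonal_one, Matrix.diagonal_sub, Matrix.trace_diagonal]
  have hdet : Real.log Sig'.det = ∑ i, Real.log (f' i) := by
    rw [Matrix.det_diagonal, Real.log_prod]
    intro i _; exact (hfpos' i).ne'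
  have hdet2 : Real.log Sig.det = ∑ i, Real.log (f i) := by
    rw [Matrix.det_diagonal, Real.log_prod]
    intro i _; exact (hfpos i).ne'
  rw [htr, hdet, hdet2]
  have hlog_up : Real.log (1+lam) ≤ lam := by
    have := Real.log_le_sub_one_of_pos h1l; linarith
  have hlog_lo : lam / (1+lam) ≤ Real.log (1+lam) := by
    have h2 : Real.log (1+lam)⁻¹ ≤ (1+lam)⁻¹ - 1 :=
      Real.log_le_sub_one_of_pos (by positivity)
    rw [Real.log_inv] at h2
    rw [div_le_iff₀ h1l]
    have : 1 - (1+lam)⁻¹ ≤ Real.log (1+lam) := by linarith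
    calc lam = (1 - (1+lam)⁻¹) * (1+lam) := by field_simp; ring
      _ ≤ Real.log (1+lam) * (1+lam) := by
          apply mul_le_mul_of_nonneg_right this h1l.le
  set A : ℝ := (3 * lam^2 + lam^3) / (1 + lam) with hA
  set B : ℝ := (3 * lam^2 + 2 * lam^3) / (1 + lam)^2 with hB
  have hApos : 0 ≤ A := by rw [hA]; positivity
  have hBpos : 0 ≤ B := by rw [hB]; positivity
  have key : ∀ i, (f' i)⁻¹ * f i - 1 + Real.log (f' i) - Real.log (f i) ≤
      (if i ∈ S then A else 0) + (if i ∈ S' then B else 0) := by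
    intro i
    simp only [hf, hf']
    by_cases h1 : i ∈ S <;> by_cases h2 : i ∈ S' <;> simp [h1, h2]
    · rw [inv_mul_cancel₀ (by positivity : ((1+lam)^2 : ℝ) ≠ 0)]
      linarith
    · -- i ∈ S, i ∉ S'
      have hAeq : A = 2*lam + lam^2 - 2*(lam/(1+lam)) := by
        rw [hA]; field_simp; ring
      rw [hAeq]; nlinarith [hlog_lo]
    · -- i ∉ S, i ∈ S'
      have hBeq : B = ((1+lam)^2)⁻¹ - 1 + 2*lam := by
        rw [hB]; field_simp; ring
      rw [hBeq]; linarith [hlog_up]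
  calc ∑ i, ((f' i)⁻¹ * f i - 1) + ∑ i, Real.log (f' i) - ∑ i, Real.log (f i)
      = ∑ i, ((f' i)⁻¹ * f i - 1 + Real.log (f' i) - Real.log (f i)) := by
        simp only [Finset.sum_sub_distrib, Finset.sum_add_distrib]
    _ ≤ ∑ i, ((if i ∈ S then A else 0) + (if i ∈ S' then B else 0)) := by
        exact Finset.sum_le_sum fun i _ => key i
    _ = S.card * A + S'.card * B := by
        rw [Finset.sum_add_distrib, Finset.sum_ite_mem, Finset.sum_ite_mem,
          Finset.univ_inter, Finset.univ_inter, Finset.sum_const, Finset.sum_const,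
          nsmul_eq_mul, nsmul_eq_mul]
    _ = S.card * (3 * lam^2 + lam^3) / (1 + lam) +
        S'.card * (3 * lam^2 + 2 * lam^3) / (1 + lam)^2 := by
        rw [hA, hB]; ring
end

section
/- Let n samples X ∈ ℝ^{d×n} satisfy X = A·M where A ∈ ℝ^{d×p} has full column rank with unit-norm columns, M ∈ ℝ^{p×n} is entrywise nonnegative, and M is separable (for each i ∈ [p] there is a column of M whose only nonzero entry is a positive entry in row i). Then no column of A can be written as a nonnegative linear combination of the normalized versions of the other columns of X that are not positive scalings of that column of A, while every other nonzero normalized column of X can be written as a nonnegative linear combination of the columns of A. -/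
/-- Euclidean norm of a vector in `Fin d → ℝ`. -/
noncomputable def enorm {d : ℕ} (x : Fin d → ℝ) : ℝ := Real.sqrt (∑ i, (x i)^2)

/-- `x` normalized to unit Euclidean norm. -/
noncomputable def normalize' {d : ℕ} (x : Fin d → ℝ) : Fin d → ℝ := (_root_.enorm x)⁻¹ • x

lemma enorm_nonneg' {d : ℕ} (x : Fin d → ℝ) : 0 ≤ _root_.enorm x := Real.sqrt_nonneg _

lemma stmt19_enorm_pos {d : ℕ} (x : Fin d → ℝ) (hx : x ≠ 0) : 0 < _root_.enorm x := by
  apply Real.sqrt_pos.mpr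
  obtain ⟨i, hi⟩ := Function.ne_iff.mp hx
  exact Finset.sum_pos' (fun j _ => sq_nonneg _) ⟨i, Finset.mem_univ i,
    by have : x i ≠ 0 := hi; positivity⟩

theorem stmt_19 (d p n : ℕ) (A : Matrix (Fin d) (Fin p) ℝ) (M : Matrix (Fin p) (Fin n) ℝ)
    (hA_rank : LinearIndependent ℝ (fun i : Fin p => fun j : Fin d => A j i))
    (hA_norm : ∀ i : Fin p, _root_.enorm (fun j : Fin d => A j i) = 1)
    (hM_nonneg : ∀ i j, 0 ≤ M i j)
    (hM_sep : ∀ i : Fin p, ∃ j : Fin n,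
      0 < M i j ∧ ∀ i' : Fin p, i' ≠ i → M i' j = 0) :
    -- columns of X = A * M
    (let Xcol : Fin n → (Fin d → ℝ) := fun j => fun i' => (A * M) i' j
     let Acol : Fin p → (Fin d → ℝ) := fun i => fun j' => A j' i
     -- (1) no column of A is a conical combination of normalized columns of X
     --     that are not positive scalings of that column of A
     (∀ i : Fin p,
        ¬ ∃ c : Fin n → ℝ, (∀ j, 0 ≤ c j) ∧
          (∀ j, c j ≠ 0 → Xcol j ≠ 0 ∧ ¬ ∃ t : ℝ, 0 < t ∧ Xcol j = t • Acol i) ∧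
          Acol i = ∑ j, c j • normalize' (Xcol j)) ∧
     -- (2) every other nonzero normalized column of X is a conical combination
     --     of the columns of A
     (∀ j : Fin n, Xcol j ≠ 0 →
        (¬ ∃ i : Fin p, ∃ t : ℝ, 0 < t ∧ Xcol j = t • Acol i) →
        ∃ c : Fin p → ℝ, (∀ i, 0 ≤ c i) ∧
          normalize' (Xcol j) = ∑ i, c i • Acol i)) := by
  intro Xcol Acol
  have hXcol : ∀ j, Xcol j = ∑ k, M k j • Acol k := by
    intro j
    funext i'
    simp [Xcol, Acol, Matrix.mul_apply, Finset.sum_apply, mul_comm]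
  have hnorm : ∀ j, normalize' (Xcol j) = ∑ k, ((_root_.enorm (Xcol j))⁻¹ * M k j) • Acol k := by
    intro j
    rw [normalize', hXcol j, Finset.smul_sum]
    simp [mul_smul]
  constructor
  · -- part (1)
    intro i ⟨c, hc_nonneg, hc_ne, hc_eq⟩
    -- expand Acol i = ∑ k b k • Acol k
    set b : Fin p → ℝ := fun k => ∑ j, c j * ((_root_.enorm (Xcol j))⁻¹ * M k j) with hb
    have hAi : Acol i = ∑ k, b k • Acol k := by
      rw [hc_eq]
      have : ∀ j, c j • normalize' (Xcol j)
          = ∑ k, (c j * ((_root_.enorm (Xcol j))⁻¹ * M k j)) • Acol k := by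
        intro j
        rw [hnorm j, Finset.smul_sum]
        simp [mul_smul]
      simp_rw [this]
      rw [Finset.sum_comm]
      congr 1
      funext k
      rw [← Finset.sum_smul]
    -- linear independence forces b k = 0 for k ≠ i
    have hzero : ∀ k, (b k - if k = i then 1 else 0) = 0 := by
      have h0 : ∑ k, (b k - if k = i then 1 else 0) • Acol k = 0 := by
        rw [Finset.sum_congr rfl (fun k _ => sub_smul (b k) _ (Acol k)),
          Finset.sum_sub_distrib]
        have : ∑ k, (if k = i then (1:ℝ) else 0) • Acol k = Acol i := by
          simp [ite_smul]
        rw [this, ← hAi, sub_self]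
      exact Fintype.linearIndependent_iff.mp hA_rank _ h0
    -- there is some j with c j ≠ 0
    have hAi_ne : Acol i ≠ 0 := by
      intro h
      have := hA_norm i
      rw [show (fun j : Fin d => A j i) = Acol i from rfl, h] at this
      simp [_root_.enorm] at this
    obtain ⟨j₀, hj₀⟩ : ∃ j, c j ≠ 0 := by
      by_contra h
      push_neg at h
      rw [hc_eq] at hAi_ne
      exact hAi_ne (by simp [h])
    obtain ⟨hX_ne, hnot⟩ := hc_ne j₀ hj₀
    have hcj₀ : 0 < c j₀ := lt_of_le_of_ne (hc_nonneg j₀) (Ne.symm hj₀)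
    have hinv_pos : 0 < (_root_.enorm (Xcol j₀))⁻¹ := inv_pos.mpr (stmt19_enorm_pos _ hX_ne)
    -- for k ≠ i, M k j₀ = 0
    have hMk : ∀ k, k ≠ i → M k j₀ = 0 := by
      intro k hk
      have hbk : b k = 0 := by
        have := hzero k
        simpa [hk] using this
      have hterm : ∀ j ∈ Finset.univ, 0 ≤ c j * ((_root_.enorm (Xcol j))⁻¹ * M k j) := by
        intro j _
        exact mul_nonneg (hc_nonneg j)
          (mul_nonneg (inv_nonneg.mpr (enorm_nonneg' _)) (hM_nonneg k j))
      have := (Finset.sum_eq_zero_iff_of_nonneg hterm).mp hbk j₀ (Finset.mem_univ j₀)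
      have h1 : (_root_.enorm (Xcol j₀))⁻¹ * M k j₀ = 0 := by
        rcases mul_eq_zero.mp this with h | h
        · exact absurd h hj₀
        · exact h
      rcases mul_eq_zero.mp h1 with h | h
      · exact absurd h (ne_of_gt hinv_pos)
      · exact h
    -- then Xcol j₀ = M i j₀ • Acol i
    have hXj₀ : Xcol j₀ = M i j₀ • Acol i := by
      rw [hXcol j₀]
      rw [Finset.sum_eq_single i]
      · intro k _ hk; rw [hMk k hk, zero_smul]
      · intro h; exact absurd (Finset.mem_univ i) h
    have hMi_pos : 0 < M i j₀ := by
      rcases lt_or_eq_of_le (hM_nonneg i j₀) with h | h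
      · exact h
      · exfalso; apply hX_ne; rw [hXj₀, ← h, zero_smul]
    exact hnot ⟨M i j₀, hMi_pos, hXj₀⟩
  · -- part (2)
    intro j hj _
    exact ⟨fun k => (_root_.enorm (Xcol j))⁻¹ * M k j,
      fun k => mul_nonneg (inv_nonneg.mpr (enorm_nonneg' _)) (hM_nonneg k j),
      hnorm j⟩
end
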